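/- arXiv:2407.13418 — 2 statements merged into one kernel-verified Lean document; each statement's English description precedes it below -/
import Mathlib

section
/- Let $V$ be a real vector space, $V_h \subseteq V$ a subspace, $A : V \times V \to \mathbb{R}$ bilinear, $F, J : V \to \mathbb{R}$ linear. Suppose $u \in V$ satisfies $A(u, \varphi) = F(\varphi)$ for all $\varphi \in V$, $u_h \in V_h$ satisfies $A(u_h, \varphi_h) = F(\varphi_h)$ for all $\varphi_h \in V_h$, and $z \in V$ satisfies the dual problem $A(\varphi, z) = J(\varphi)$ for all $\varphi \in V$. Then for every $\tilde{z}_h \in V_h$ the error identity $J(u) - J(u_h) = F(z - \tilde{z}_h) - A(u_h, z - \tilde{z}_h) = \rho(u_h)(z - \tilde{z}_h)$ holds, where $\rho(u_h)(\varphi) := F(\varphi) - A(u_h, \varphi)$ is the primal residual. -/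
/-- DWR error identity in the linear setting.  If `u` solves the
primal problem on `V`, `u_h ∈ V_h` solves the Galerkin problem on the subspace
`V_h`, and `z` solves the dual problem, then for every `z̃_h ∈ V_h` the
goal-functional error equals the primal residual
`ρ(u_h)(φ) = F φ - A u_h φ` tested with the dual weight `z - z̃_h`. -/
theorem stmt6_dwr_error_identity
    (V : Type*) [AddCommGroup V] [Module ℝ V] (Vh : Submodule ℝ V)
    (A : V →ₗ[ℝ] V →ₗ[ℝ] ℝ) (F J : V →ₗ[ℝ] ℝ)
    (u uh z : V) (huh : uh ∈ Vh)
    (hprimal : ∀ φ : V, A u φ = F φ)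
    (hgalerkin : ∀ φh ∈ Vh, A uh φh = F φh)
    (hdual : ∀ φ : V, A φ z = J φ) :
    ∀ ztildeh ∈ Vh,
      J u - J uh = F (z - ztildeh) - A uh (z - ztildeh) := by
  intro zt hzt
  have h1 : J u = F z := by rw [← hdual u, hprimal]
  have h2 : J uh = A uh z := (hdual uh).symm
  have h3 : A uh zt = F zt := hgalerkin zt hzt
  simp [map_sub, h1, h2, h3]
end

section
/- Let $V$ be a real vector space, $V_h \subseteq V$ a subspace, $A : V \times V \to \mathbb{R}$ bilinear, $S : V_h \times V_h \to \mathbb{R}$ a (stabilization) bilinear form, $F, J : V \to \mathbb{R}$ linear. Suppose $u \in V$ solves $A(u,\varphi) = F(\varphi)$ for all $\varphi \in V$, $u_h \in V_h$ solves the stabilized problem $A(u_h, \varphi_h) + S(u_h, \varphi_h) = F(\varphi_h)$ for all $\varphi_h \in V_h$, and $z \in V$ solves the dual problem $A(\varphi, z) = J(\varphi)$ for all $\varphi \in V$. Then for every $\tilde{z}_h \in V_h$: $J(u) - J(u_h) = \rho(u_h)(z - \tilde{z}_h) + S(u_h, \tilde{z}_h)$, where $\rho(u_h)(\varphi) :=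 F(\varphi) - A(u_h, \varphi)$. -/
/-- DWR error identity for a stabilized Galerkin method.  If `u`
solves the primal problem, `u_h ∈ V_h` solves the stabilized discrete problem
`A(u_h,φ_h) + S(u_h,φ_h) = F(φ_h)` for all `φ_h ∈ V_h`, and `z` solves the dual
problem, then for every `z̃_h ∈ V_h`:
`J u - J u_h = ρ(u_h)(z - z̃_h) + S(u_h, z̃_h)` where `ρ(u_h)(φ) = F φ - A u_h φ`. -/
theorem stmt7_dwr_stabilized_error_identity
    (V : Type*) [AddCommGroup V] [Module ℝ V] (Vh : Submodule ℝ V)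
    (A S : V →ₗ[ℝ] V →ₗ[ℝ] ℝ) (F J : V →ₗ[ℝ] ℝ)
    (u uh z : V) (huh : uh ∈ Vh)
    (hprimal : ∀ φ : V, A u φ = F φ)
    (hgalerkin : ∀ φh ∈ Vh, A uh φh + S uh φh = F φh)
    (hdual : ∀ φ : V, A φ z = J φ) :
    ∀ ztildeh ∈ Vh,
      J u - J uh = (F (z - ztildeh) - A uh (z - ztildeh)) + S uh ztildeh := by
  intro zt hzt
  have h1 := hgalerkin zt hzt
  have h2 := hdual u
  have h4 := hprimal z
  have h3 := hdual uh
  simp only [map_sub]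
  linarith
end
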